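/- Let M be a DFA over alphabet Σ with a finite state type Q, accepting set Q_m, and accepted language L_m(M). If T ⊆ Σ^ω is markable with respect to L_m(M), then for every ultimately periodic word t·u^ω ∈ T (u nonempty) there exists a single accepting state q ∈ Q_m that is visited infinitely often by the run of t·u^ω in M, i.e., the set {n ∈ ℕ | the run state q_n of t·u^ω equals q} is infinite. -/

import Mathlib

variable {σ : Type*}

/-- The length-`n` prefix of an ω-word `w`: the finite word `w(0)w(1)⋯w(n-1)`. -/
def wPrefix (w : ℕ → σ) (n : ℕ) : List σ := (List.range n).map w

/-- The ultimately periodic ω-word `t·u^ω` (for `u` nonempty): it starts with `t`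
and then repeats `u` forever. -/
def catPow (t u : List σ) (hu : u ≠ []) : ℕ → σ :=
  fun n =>
    if h : n < t.length then t.get ⟨n, h⟩
    else u.get ⟨(n - t.length) % u.length, Nat.mod_lt _ (List.length_pos_iff.mpr hu)⟩

/-- `T` is markable with respect to the marker language `Lm`: for every `t` and
nonempty `u` with `t·u^ω ∈ T`, some length-`n` prefix of `t·u^ω` with `n ≥ |t|`
belongs to `Lm`. -/
def Markable (Lm : Set (List σ)) (T : Set (ℕ → σ)) : Prop :=
  ∀ (t u : List σ) (hu : u ≠ []), catPow t u hu ∈ T →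
    ∃ n, t.length ≤ n ∧ wPrefix (catPow t u hu) n ∈ Lm

/-- `pre(S)`: the set of all finite prefixes of members of the ω-language `S`. -/
def wPre (S : Set (ℕ → σ)) : Set (List σ) := {x | ∃ w ∈ S, ∃ n, x = wPrefix w n}

/-- The prefix-closure of a `*`-language `K`. -/
def precl (K : Set (List σ)) : Set (List σ) := {x | ∃ y ∈ K, x <+: y}

/-
Markability applies to every decomposition `s·u^ω` of the same word, and `s` can be taken as
long as we like by absorbing copies of `u` (`t·u^ω = (tu)·u^ω`). Hence accepted prefixes of
`t·u^ω` occur at unboundedly many lengths, and since the accepting set is finite, one accepting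
state is reached at infinitely many of them.
-/

lemma catPow_append (t u : List σ) (hu : u ≠ []) :
    catPow (t ++ u) u hu = catPow t u hu := by
  funext n
  simp only [catPow, List.length_append, List.get_eq_getElem]
  by_cases h1 : n < t.length
  · rw [dif_pos (by omega), dif_pos h1, List.getElem_append_left h1]
  · rw [dif_neg h1]
    by_cases h2 : n < t.length + u.length
    · rw [dif_pos h2, List.getElem_append_right (by omega)]
      congr 1
      rw [Nat.mod_eq_of_lt (by omega)]
    · rw [dif_neg h2]
      congr 1
      rw [show n - t.length = n - (t.length + u.length) + u.length by omega, Nat.add_mod_right]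

lemma exists_le_length_catPow_eq (t u : List σ) (hu : u ≠ []) (N : ℕ) :
    ∃ s : List σ, N ≤ s.length ∧ catPow s u hu = catPow t u hu := by
  induction N with
  | zero => exact ⟨t, Nat.zero_le _, rfl⟩
  | succ N ih =>
    obtain ⟨s, hs, hs_eq⟩ := ih
    have hu_pos : 0 < u.length := List.length_pos_iff.mpr hu
    exact ⟨s ++ u, by rw [List.length_append]; omega, (catPow_append s u hu).trans hs_eq⟩

lemma Markable.infinite_setOf_wPrefix_mem {Lm : Set (List σ)} {T : Set (ℕ → σ)}
    (hT : Markable Lm T) {t u : List σ} (hu : u ≠ []) (ht : catPow t u hu ∈ T) :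
    {n | wPrefix (catPow t u hu) n ∈ Lm}.Infinite := by
  refine Set.infinite_of_forall_exists_gt fun N => ?_
  obtain ⟨s, hs, hs_eq⟩ := exists_le_length_catPow_eq t u hu (N + 1)
  obtain ⟨n, hn, hmem⟩ := hT s u hu (hs_eq ▸ ht)
  exact ⟨n, hs_eq ▸ hmem, by omega⟩

lemma Set.Finite.exists_mem_infinite_setOf_eq {α β : Type*} {f : α → β} {S : Set β}
    (hS : S.Finite) (h : {a | f a ∈ S}.Infinite) : ∃ b ∈ S, {a | f a = b}.Infinite := by
  by_contra! hfin
  exact h ((hS.biUnion hfin).subset fun a ha => Set.mem_biUnion ha rfl)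

theorem exists_accepting_state_visited_infinitely {Q : Type*} [Finite Q]
    (M : DFA σ Q) (T : Set (ℕ → σ)) (hT : Markable M.accepts T) :
    ∀ (t u : List σ) (hu : u ≠ []), catPow t u hu ∈ T →
      ∃ q ∈ M.accept, {n : ℕ | M.eval (wPrefix (catPow t u hu) n) = q}.Infinite :=
  fun _ _ hu ht =>
    M.accept.toFinite.exists_mem_infinite_setOf_eq (hT.infinite_setOf_wPrefix_mem hu ht)
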